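/- arXiv:1506.00273 — 2 statements merged into one kernel-verified Lean document; each statement's English description precedes it below -/
import Mathlib

section
/- A function f : {0,1}^n × {0,1}^n → {0,1} is permutation-invariant if and only if there exists a function h : ℕ × ℕ × ℕ → {0,1} such that f(x,y) = h(|x|, |y|, Δ(x,y)) for all x, y ∈ {0,1}^n. -/
open Finset

/-- Hamming weight of a Boolean string. -/
def wt {n : ℕ} (x : Fin n → Bool) : ℕ :=
  (Finset.univ.filter fun i => x i = true).card

lemma exists_perm' {n : ℕ} {α : Type*} [DecidableEq α] (g g' : Fin n → α)
    (hc : ∀ v, Fintype.card {i // g i = v} = Fintype.card {i // g' i = v}) :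
    ∃ π : Equiv.Perm (Fin n), ∀ i, g (π i) = g' i := by
  have e : ∀ v, {i // g' i = v} ≃ {i // g i = v} := fun v =>
    Fintype.equivOfCardEq (hc v).symm
  refine ⟨(Equiv.sigmaFiberEquiv g').symm.trans
    ((Equiv.sigmaCongrRight e).trans (Equiv.sigmaFiberEquiv g)), fun i => ?_⟩
  exact (e (g' i) ⟨i, rfl⟩).2

/-- pattern count -/
def cnt {n : ℕ} (x y : Fin n → Bool) (v : Bool × Bool) : ℕ :=
  ∑ i, if (x i, y i) = v then 1 else 0

lemma wt_eq_cnt {n : ℕ} (x y : Fin n → Bool) :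
    wt x = cnt x y (true, true) + cnt x y (true, false) := by
  rw [wt, Finset.card_filter, cnt, cnt, ← Finset.sum_add_distrib]
  refine Finset.sum_congr rfl fun i _ => ?_
  cases hx : x i <;> cases hy : y i <;> simp [hx, hy]

lemma wt_eq_cnt' {n : ℕ} (x y : Fin n → Bool) :
    wt y = cnt x y (true, true) + cnt x y (false, true) := by
  rw [wt, Finset.card_filter, cnt, cnt, ← Finset.sum_add_distrib]
  refine Finset.sum_congr rfl fun i _ => ?_
  cases hx : x i <;> cases hy : y i <;> simp [hx, hy]

lemma dist_eq_cnt {n : ℕ} (x y : Fin n → Bool) :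
    hammingDist x y = cnt x y (true, false) + cnt x y (false, true) := by
  rw [hammingDist, Finset.card_filter, cnt, cnt, ← Finset.sum_add_distrib]
  refine Finset.sum_congr rfl fun i _ => ?_
  cases hx : x i <;> cases hy : y i <;> simp [hx, hy]

lemma sum_cnt {n : ℕ} (x y : Fin n → Bool) :
    cnt x y (true, true) + cnt x y (true, false) + cnt x y (false, true)
      + cnt x y (false, false) = n := by
  simp only [cnt, ← Finset.sum_add_distrib]
  have : ∀ i : Fin n, ((if (x i, y i) = (true, true) then 1 else 0)
      + (if (x i, y i) = (true, false) then 1 else 0)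
      + (if (x i, y i) = (false, true) then 1 else 0)
      + (if (x i, y i) = (false, false) then 1 else 0) : ℕ) = 1 := by
    intro i; cases hx : x i <;> cases hy : y i <;> simp [hx, hy]
  rw [Finset.sum_congr rfl fun i _ => this i]
  simp

lemma card_fiber_eq_cnt {n : ℕ} (x y : Fin n → Bool) (v : Bool × Bool) :
    Fintype.card {i // (x i, y i) = v} = cnt x y v := by
  rw [Fintype.card_subtype, Finset.card_filter, cnt]

lemma key {n : ℕ} (f : (Fin n → Bool) → (Fin n → Bool) → Bool)
    (hf : ∀ (π : Equiv.Perm (Fin n)) (x y : Fin n → Bool),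
        f x y = f (fun i => x (π i)) (fun i => y (π i)))
    (x y x' y' : Fin n → Bool) (h1 : wt x = wt x') (h2 : wt y = wt y')
    (h3 : hammingDist x y = hammingDist x' y') : f x y = f x' y' := by
  have hcnt : ∀ v, cnt x y v = cnt x' y' v := by
    have e1 := (wt_eq_cnt x y).symm.trans (h1.trans (wt_eq_cnt x' y'))
    have e2 := (wt_eq_cnt' x y).symm.trans (h2.trans (wt_eq_cnt' x' y'))
    have e3 := (dist_eq_cnt x y).symm.trans (h3.trans (dist_eq_cnt x' y'))
    have e4 := (sum_cnt x y).trans (sum_cnt x' y').symm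
    rintro ⟨(_|_), (_|_)⟩ <;> omega
  obtain ⟨π, hπ⟩ := exists_perm' (fun i => (x i, y i)) (fun i => (x' i, y' i))
    (fun v => by rw [card_fiber_eq_cnt, card_fiber_eq_cnt, hcnt])
  rw [hf π x y]
  congr 1 <;> funext i
  · exact congrArg Prod.fst (hπ i)
  · exact congrArg Prod.snd (hπ i)

/-- f is permutation-invariant iff f(x,y) = h(|x|, |y|, Δ(x,y)) for some h. -/
theorem stmt_5 {n : ℕ} (f : (Fin n → Bool) → (Fin n → Bool) → Bool) :
    (∀ (π : Equiv.Perm (Fin n)) (x y : Fin n → Bool),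
        f x y = f (fun i => x (π i)) (fun i => y (π i))) ↔
      (∃ h : ℕ → ℕ → ℕ → Bool,
        ∀ x y : Fin n → Bool, f x y = h (wt x) (wt y) (hammingDist x y)) := by
  constructor
  · intro hf
    classical
    refine ⟨fun a b d => if hx : ∃ p : (Fin n → Bool) × (Fin n → Bool),
        wt p.1 = a ∧ wt p.2 = b ∧ hammingDist p.1 p.2 = d
      then f hx.choose.1 hx.choose.2 else false, fun x y => ?_⟩
    have hx : ∃ p : (Fin n → Bool) × (Fin n → Bool),
        wt p.1 = wt x ∧ wt p.2 = wt y ∧ hammingDist p.1 p.2 = hammingDist x y :=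
      ⟨(x, y), rfl, rfl, rfl⟩
    beta_reduce
    rw [dif_pos hx]
    obtain ⟨h1, h2, h3⟩ := hx.choose_spec
    exact key f hf x y _ _ h1.symm h2.symm h3.symm
  · rintro ⟨h, hh⟩ π x y
    have hw : ∀ z : Fin n → Bool, wt (fun i => z (π i)) = wt z := by
      intro z
      rw [wt, wt, Finset.card_filter, Finset.card_filter]
      exact Fintype.sum_equiv π _ _ fun i => rfl
    have hd : hammingDist (fun i => x (π i)) (fun i => y (π i)) = hammingDist x y := by
      rw [hammingDist, hammingDist, Finset.card_filter, Finset.card_filter]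
      exact Fintype.sum_equiv π _ _ fun i => rfl
    rw [hh, hh, hw, hw, hd]
end

section
/- Let n, k, t be positive integers with k < n/20 and t = ⌊n/(10k)⌋ ≥ 1. Then (1 - 2k/n)^t - (1 - 2(k+1)/n)^t ≥ (1 - 2kt/n)·(1 - e^{-t/(n/2 - k)}), and this quantity is at least c/k for some absolute constant c > 0. -/
set_option maxHeartbeats 800000 in
/-- For k < n/20 and t = ⌊n/(10k)⌋ ≥ 1, the gap
    (1-2k/n)^t - (1-2(k+1)/n)^t is at least (1-2kt/n)(1-e^{-t/(n/2-k)}),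
    which in turn is at least c/k for an absolute constant c > 0. -/
theorem stmt_11 :
    ∃ c : ℝ, 0 < c ∧
      ∀ (n k t : ℕ), 0 < n → 0 < k →
        (k : ℝ) < (n : ℝ) / 20 →
        t = ⌊(n : ℝ) / (10 * k)⌋₊ → 1 ≤ t →
        ((1 - 2 * (k : ℝ) / n) ^ t - (1 - 2 * ((k : ℝ) + 1) / n) ^ t
            ≥ (1 - 2 * (k : ℝ) * t / n) * (1 - Real.exp (-(t : ℝ) / ((n : ℝ) / 2 - k)))
          ∧ (1 - 2 * (k : ℝ) * t / n) * (1 - Real.exp (-(t : ℝ) / ((n : ℝ) / 2 - k)))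
            ≥ c / k) := by
  refine ⟨1/25, by norm_num, ?_⟩
  intro n k t hn hk hkn htdef ht1
  have hK1 : (1:ℝ) ≤ (k:ℝ) := by exact_mod_cast hk
  have hN20 : (20:ℝ) < (n:ℝ) := by nlinarith
  have hN0 : (0:ℝ) < (n:ℝ) := by linarith
  have hK0 : (0:ℝ) < (k:ℝ) := by linarith
  have hT1 : (1:ℝ) ≤ (t:ℝ) := by exact_mod_cast ht1
  have hTle : (t:ℝ) ≤ (n:ℝ) / (10 * k) := by
    rw [htdef]; exact Nat.floor_le (by positivity)
  have hTgt : (n:ℝ) / (10 * k) < (t:ℝ) + 1 := by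
    rw [htdef]; exact Nat.lt_floor_add_one _
  have hA : (t:ℝ) * (10 * k) ≤ (n:ℝ) := (le_div_iff₀ (by positivity)).mp hTle
  have hB : (n:ℝ) < ((t:ℝ) + 1) * (10 * k) := (div_lt_iff₀ (by positivity)).mp hTgt
  clear htdef
  set N := (n:ℝ) with hN_def
  set K := (k:ℝ) with hK_def
  set T := (t:ℝ) with hT_def
  clear_value N K T
  set m := N / 2 - K with hm_def
  have hm0 : (0:ℝ) < m := by rw [hm_def]; nlinarith
  have hmN : m ≤ N / 2 := by rw [hm_def]; linarith
  set x := T / m with hx_def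
  clear_value m x
  have hx0 : 0 < x := by rw [hx_def]; positivity
  -- x ≤ 1
  have hx1 : x ≤ 1 := by
    rw [hx_def, div_le_one hm0, hm_def]
    nlinarith
  -- exp(-x) ≤ 1 - x/2
  have hExp : Real.exp (-x) ≤ 1 - x / 2 := by
    have hmul : Real.exp (-x) * Real.exp x = 1 := by
      rw [← Real.exp_add]; simp
    nlinarith [Real.add_one_le_exp x, Real.exp_pos x, Real.exp_pos (-x)]
  have hE1 : Real.exp (-x) ≤ 1 := by
    calc Real.exp (-x) ≤ Real.exp 0 := Real.exp_le_exp.mpr (by linarith)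
    _ = 1 := Real.exp_zero
  -- rewrite goal exponent
  have hform : -T / m = -x := by
    rw [hx_def, neg_div]
  rw [hform]
  -- 2K/N and 2KT/N bounds
  have h2K : 2 * K / N ≤ 1 / 5 := by
    rw [div_le_iff₀ hN0]; nlinarith
  have h45 : 2 * K * T / N ≤ 1 / 5 := by
    rw [div_le_iff₀ hN0]; nlinarith
  -- Bernoulli: (1 - 2K/N)^t ≥ 1 - 2KT/N
  have hBer : 1 - 2 * K * T / N ≤ (1 - 2 * K / N) ^ t := by
    have h := one_add_mul_le_pow (a := -(2 * K / N)) (by linarith) t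
    have heq : (1 : ℝ) + (t:ℕ) * -(2 * K / N) = 1 - 2 * K * T / N := by
      rw [← hT_def]; ring
    have heq2 : (1 : ℝ) + -(2 * K / N) = 1 - 2 * K / N := by ring
    rw [heq, heq2] at h
    exact h
  have ha0 : (0:ℝ) ≤ 1 - 2 * K / N := by linarith
  have hm_ne : N / 2 - K ≠ 0 := by rw [← hm_def]; exact hm0.ne'
  -- b = a * (1 - 1/m)
  have hNK2 : N - K * 2 ≠ 0 := by
    have : 0 < N - K * 2 := by linarith
    exact this.ne'
  have haa : 1 - 2 * K / N = 2 * m / N := by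
    rw [hm_def]; field_simp
  have hba : 1 - 2 * (K + 1) / N = (1 - 2 * K / N) * (1 - 1 / m) := by
    have hcalc : (1 - 2 * K / N) * (1 - 1 / m) = 2 * m / N - 2 / N := by
      rw [haa]; field_simp [hm0.ne']
    rw [hcalc]
    rw [hm_def]
    field_simp [hNK2]
    ring
  have h1m : (0:ℝ) ≤ 1 - 1 / m := by
    have : 1 / m ≤ 1 := by
      rw [div_le_one hm0, hm_def]; linarith
    linarith
  have hbE : (1 - 2 * (K + 1) / N) ^ t ≤ (1 - 2 * K / N) ^ t * Real.exp (-x) := by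
    rw [hba, mul_pow]
    have h1 : (1 - 1 / m) ^ t ≤ Real.exp (-(1 / m)) ^ t := by
      apply pow_le_pow_left₀ h1m
      linarith [Real.add_one_le_exp (-(1 / m))]
    have h2 : Real.exp (-(1 / m)) ^ t = Real.exp (-x) := by
      rw [← Real.exp_nat_mul, hx_def, ← hT_def]
      congr 1
      field_simp
    rw [← h2]
    exact mul_le_mul_of_nonneg_left h1 (by positivity)
  constructor
  · nlinarith [hbE, hBer, hE1, pow_nonneg ha0 t]
  · -- lower bound c/k
    have hx_lb : 1 / (10 * K) ≤ x := by
      rw [hx_def, div_le_div_iff₀ (by positivity) hm0]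
      nlinarith
    have h1E : 1 / (20 * K) ≤ 1 - Real.exp (-x) := by
      have heq : (1 / (10 * K)) / 2 = 1 / (20 * K) := by
        field_simp
        ring
      nlinarith [hExp]
    have hfac : (4:ℝ) / 5 ≤ 1 - 2 * K * T / N := by linarith
    have hfin : (1/25 : ℝ) / K = (4/5 : ℝ) * (1 / (20 * K)) := by
      field_simp
      ring
    rw [ge_iff_le, hfin]
    apply mul_le_mul hfac h1E (by positivity) (by linarith)
end
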